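/- Let μ ∈ ℝ, σ > 0 and t ∈ ℝ, and set t̃ = (t − μ)/σ. Then the expected threshold-weighted CRPS of the Gaussian distribution Φ_{μ,σ²}, with weighting measure γ₁ having Lebesgue density u ↦ 1{u ≥ t}, satisfies CRPS_{γ₁}(Φ_{μ,σ²}) = σ·[ t̃·Φ(t̃)² − t̃·Φ(t̃) + 1/√π − (1/√π)·Φ(t̃·√2) + 2φ(t̃)Φ(t̃) − φ(t̃) ]. -/

import Mathlib

open MeasureTheory ProbabilityTheory Set

noncomputable section

/-- The standard normal distribution `N(0,1)` on `ℝ`. -/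
def stdNormal : Measure ℝ := gaussianReal 0 1

/-- The standard normal CDF `Φ`. -/
def Phi (x : ℝ) : ℝ := (stdNormal (Iic x)).toReal

/-- The standard normal PDF `φ`. -/
def stdPDF (x : ℝ) : ℝ := (Real.sqrt (2 * Real.pi))⁻¹ * Real.exp (-(x ^ 2) / 2)

/-- The CDF of the normal distribution `N(μ, σ²)`: `Φ_{μ,σ²}(u) = Φ((u - μ)/σ)`. -/
def normCDF (μ σ : ℝ) (u : ℝ) : ℝ := Phi ((u - μ) / σ)

/-- The normal distribution `N(μ, σ²)` as a measure on `ℝ`. -/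
def gaussMeasure (μ σ : ℝ) : Measure ℝ := gaussianReal μ ⟨σ ^ 2, sq_nonneg σ⟩

/-- Threshold-weighted CRPS of a predictive CDF `F` at observation `y`, with weighting
measure `γ`: `∫ (F u - 1{y ≤ u})² dγ(u)`. -/
def twCRPS (γ : Measure ℝ) (F : ℝ → ℝ) (y : ℝ) : ℝ :=
  ∫ u, (F u - (Ici y).indicator (fun _ => (1 : ℝ)) u) ^ 2 ∂γ

/-- Expected threshold-weighted CRPS of the Gaussian `N(μ, σ²)` with weighting measure `γ`:
the expectation of `y ↦ CRPS_γ(Φ_{μ,σ²}, y)` for `y ∼ N(μ, σ²)`. -/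
def etwCRPS (γ : Measure ℝ) (μ σ : ℝ) : ℝ :=
  ∫ y, twCRPS γ (normCDF μ σ) y ∂(gaussMeasure μ σ)

/-- `γ₁`: the Borel measure on `ℝ` with Lebesgue density `u ↦ 1{u ≥ t}`. -/
def gamma1 (t : ℝ) : Measure ℝ :=
  volume.withDensity ((Ici t).indicator fun _ => (1 : ENNReal))

/-- `γ₂`: the Borel measure on `ℝ` with Lebesgue density `u ↦ (1/σγ) φ((u - t)/σγ)`. -/
def gamma2 (t σγ : ℝ) : Measure ℝ :=
  volume.withDensity fun u => ENNReal.ofReal (1 / σγ * stdPDF ((u - t) / σγ))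

end

noncomputable section Aux

open Filter

instance : IsProbabilityMeasure stdNormal :=
  inferInstanceAs (IsProbabilityMeasure (gaussianReal 0 1))

instance (μ σ : ℝ) : IsProbabilityMeasure (gaussMeasure μ σ) :=
  instIsProbabilityMeasureGaussianReal μ _

lemma stdPDF_eq : stdPDF = gaussianPDFReal 0 1 := by
  funext x
  simp [stdPDF, gaussianPDFReal]

lemma stdPDF_nonneg (x : ℝ) : 0 ≤ stdPDF x := by
  unfold stdPDF; positivity

lemma continuous_stdPDF : Continuous stdPDF := by
  unfold stdPDF; fun_prop

lemma integrable_stdPDF : Integrable stdPDF := by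
  rw [stdPDF_eq]; exact integrable_gaussianPDFReal 0 1

lemma integral_stdPDF : ∫ x, stdPDF x = 1 := by
  rw [stdPDF_eq]; exact integral_gaussianPDFReal_eq_one 0 one_ne_zero

lemma Phi_eq (x : ℝ) : Phi x = ∫ y in Iic x, stdPDF y := by
  rw [Phi, stdNormal, gaussianReal_apply_eq_integral 0 one_ne_zero,
    ENNReal.toReal_ofReal
      (setIntegral_nonneg measurableSet_Iic fun y _ => gaussianPDFReal_nonneg 0 1 y),
    stdPDF_eq]

lemma hasDerivAt_Phi (x : ℝ) : HasDerivAt Phi (stdPDF x) x := by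
  have h : ∀ y : ℝ, Phi y = (∫ z in Iic (0:ℝ), stdPDF z) + ∫ z in (0:ℝ)..y, stdPDF z := by
    intro y
    rw [Phi_eq, ← intervalIntegral.integral_Iic_sub_Iic integrable_stdPDF.integrableOn
      integrable_stdPDF.integrableOn]
    ring
  have h2 : HasDerivAt (fun y : ℝ => (∫ z in Iic (0:ℝ), stdPDF z) + ∫ z in (0:ℝ)..y, stdPDF z)
      (stdPDF x) x := by
    refine HasDerivAt.const_add _ ?_
    exact intervalIntegral.integral_hasDerivAt_right
      integrable_stdPDF.intervalIntegrable
      continuous_stdPDF.stronglyMeasurable.stronglyMeasurableAtFilter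
      continuous_stdPDF.continuousAt
  exact h2.congr_of_eventuallyEq (Eventually.of_forall h)

lemma continuous_Phi : Continuous Phi :=
  continuous_iff_continuousAt.mpr fun x => (hasDerivAt_Phi x).continuousAt

lemma Phi_nonneg (x : ℝ) : 0 ≤ Phi x := ENNReal.toReal_nonneg

lemma Phi_le_one (x : ℝ) : Phi x ≤ 1 := by
  have h : stdNormal (Iic x) ≤ 1 := prob_le_one
  calc Phi x ≤ (1 : ENNReal).toReal := ENNReal.toReal_mono ENNReal.one_ne_top h
  _ = 1 := by simp

lemma tendsto_Phi_atTop : Tendsto Phi atTop (nhds 1) := by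
  have h := tendsto_measure_Iic_atTop stdNormal
  have h2 : Tendsto (fun x => (stdNormal (Iic x)).toReal) atTop
      (nhds (stdNormal Set.univ).toReal) :=
    (ENNReal.tendsto_toReal (measure_ne_top _ _)).comp h
  rw [measure_univ, ENNReal.toReal_one] at h2
  exact h2

lemma one_sub_Phi (x : ℝ) : 1 - Phi x = ∫ y in Ioi x, stdPDF y := by
  have h := intervalIntegral.integral_Iic_add_Ioi (b := x) integrable_stdPDF.integrableOn
    integrable_stdPDF.integrableOn
  rw [integral_stdPDF] at h
  rw [Phi_eq]; linarith

lemma hasDerivAt_stdPDF (x : ℝ) : HasDerivAt stdPDF (-x * stdPDF x) x := by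
  have h1 : HasDerivAt (fun y : ℝ => -(y ^ 2) / 2) (-x) x := by
    have := ((hasDerivAt_pow 2 x).neg).div_const 2
    exact this.congr_deriv (by ring)
  have h2 := (h1.exp).const_mul (Real.sqrt (2 * Real.pi))⁻¹
  refine HasDerivAt.congr_deriv (f := stdPDF) h2 ?_
  unfold stdPDF; ring

lemma tendsto_stdPDF_atTop : Tendsto stdPDF atTop (nhds 0) := by
  have h1 : Tendsto (fun x : ℝ => -(x ^ 2) / 2) atTop atBot := by
    apply Tendsto.atBot_div_const two_pos
    exact tendsto_neg_atTop_atBot.comp (tendsto_pow_atTop two_ne_zero)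
  have h2 : Tendsto (fun x : ℝ => Real.exp (-(x ^ 2) / 2)) atTop (nhds 0) :=
    Real.tendsto_exp_atBot.comp h1
  have h3 := h2.const_mul (Real.sqrt (2 * Real.pi))⁻¹
  rw [mul_zero] at h3
  unfold stdPDF
  exact h3

lemma tail_mul_stdPDF {x : ℝ} (hx : 0 ≤ x) :
    ∫ y in Ioi x, y * stdPDF y = stdPDF x := by
  have hderiv : ∀ y ∈ Ici x, HasDerivAt (fun z => -stdPDF z) (y * stdPDF y) y := by
    intro y _
    have := (hasDerivAt_stdPDF y).neg
    exact this.congr_deriv (by ring)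
  have hpos : ∀ y ∈ Ioi x, 0 ≤ y * stdPDF y := fun y hy =>
    mul_nonneg (le_trans hx (le_of_lt hy)) (stdPDF_nonneg y)
  have htend : Tendsto (fun z => -stdPDF z) atTop (nhds 0) := by
    simpa using tendsto_stdPDF_atTop.neg
  have := integral_Ioi_of_hasDerivAt_of_nonneg' hderiv hpos htend
  simpa using this

lemma tail_mul_stdPDF_integrable {x : ℝ} (hx : 0 ≤ x) :
    IntegrableOn (fun y => y * stdPDF y) (Ioi x) := by
  have hderiv : ∀ y ∈ Ici x, HasDerivAt (fun z => -stdPDF z) (y * stdPDF y) y := by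
    intro y _
    have := (hasDerivAt_stdPDF y).neg
    exact this.congr_deriv (by ring)
  have hpos : ∀ y ∈ Ioi x, 0 ≤ y * stdPDF y := fun y hy =>
    mul_nonneg (le_trans hx (le_of_lt hy)) (stdPDF_nonneg y)
  have htend : Tendsto (fun z => -stdPDF z) atTop (nhds 0) := by
    simpa using tendsto_stdPDF_atTop.neg
  exact integrableOn_Ioi_deriv_of_nonneg' hderiv hpos htend

lemma one_sub_Phi_le {x : ℝ} (hx : 1 ≤ x) : 1 - Phi x ≤ stdPDF x := by
  have hx0 : (0:ℝ) ≤ x := by linarith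
  rw [one_sub_Phi]
  calc ∫ y in Ioi x, stdPDF y ≤ ∫ y in Ioi x, y * stdPDF y := by
        refine setIntegral_mono_on integrable_stdPDF.integrableOn
          (tail_mul_stdPDF_integrable hx0) measurableSet_Ioi ?_
        intro y hy
        have h1 : (1:ℝ) ≤ y := le_trans hx (le_of_lt hy)
        nlinarith [stdPDF_nonneg y]
  _ = stdPDF x := tail_mul_stdPDF hx0

lemma tendsto_mul_stdPDF : Tendsto (fun x => x * stdPDF x) atTop (nhds 0) := by
  have h1 : Tendsto (fun x : ℝ => (Real.sqrt (2 * Real.pi))⁻¹ * (x ^ 1 * Real.exp (-x)))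
      atTop (nhds ((Real.sqrt (2 * Real.pi))⁻¹ * 0)) :=
    (Real.tendsto_pow_mul_exp_neg_atTop_nhds_zero 1).const_mul _
  rw [mul_zero] at h1
  apply tendsto_of_tendsto_of_tendsto_of_le_of_le' tendsto_const_nhds h1
  · filter_upwards [eventually_ge_atTop (0:ℝ)] with x hx
    exact mul_nonneg hx (stdPDF_nonneg x)
  · filter_upwards [eventually_ge_atTop (2:ℝ)] with x hx
    have hx0 : (0:ℝ) ≤ x := by linarith
    have hexp : Real.exp (-(x ^ 2) / 2) ≤ Real.exp (-x) := by
      apply Real.exp_le_exp.mpr; nlinarith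
    have hs : (0:ℝ) < (Real.sqrt (2 * Real.pi))⁻¹ := by positivity
    calc x * stdPDF x = (Real.sqrt (2 * Real.pi))⁻¹ * (x * Real.exp (-(x ^ 2) / 2)) := by
          unfold stdPDF; ring
    _ ≤ (Real.sqrt (2 * Real.pi))⁻¹ * (x ^ 1 * Real.exp (-x)) := by
          rw [pow_one]
          exact mul_le_mul_of_nonneg_left (mul_le_mul_of_nonneg_left hexp hx0) hs.le

/-- The antiderivative appearing in the closed form. -/
def Gfun (x : ℝ) : ℝ :=
  x * Phi x ^ 2 - x * Phi x + 2 * stdPDF x * Phi x - stdPDF x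
    - 1 / Real.sqrt Real.pi * Phi (x * Real.sqrt 2)

lemma key_pdf_identity (x : ℝ) :
    2 * stdPDF x ^ 2 = 1 / Real.sqrt Real.pi * (stdPDF (x * Real.sqrt 2) * Real.sqrt 2) := by
  have h2 : Real.sqrt 2 ^ 2 = 2 := Real.sq_sqrt two_pos.le
  have hsqrt : Real.sqrt (2 * Real.pi) = Real.sqrt 2 * Real.sqrt Real.pi :=
    Real.sqrt_mul two_pos.le _
  have hpi : Real.sqrt Real.pi * Real.sqrt Real.pi = Real.pi :=
    Real.mul_self_sqrt Real.pi_pos.le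
  have h2' : Real.sqrt 2 * Real.sqrt 2 = 2 := Real.mul_self_sqrt two_pos.le
  have hexp : Real.exp (-(x ^ 2) / 2) ^ 2 = Real.exp (-((x * Real.sqrt 2) ^ 2) / 2) := by
    rw [sq, ← Real.exp_add, mul_pow, h2]
    ring_nf
  have hπ : (0:ℝ) < Real.sqrt Real.pi := Real.sqrt_pos.mpr Real.pi_pos
  have h2pos : (0:ℝ) < Real.sqrt 2 := Real.sqrt_pos.mpr two_pos
  unfold stdPDF
  rw [mul_pow, ← hexp, hsqrt]
  field_simp
  linear_combination -h2

lemma hasDerivAt_Gfun (x : ℝ) : HasDerivAt Gfun (-(Phi x - Phi x ^ 2)) x := by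
  have hP := hasDerivAt_Phi x
  have hf := hasDerivAt_stdPDF x
  have hid : HasDerivAt (fun y : ℝ => y * Real.sqrt 2) (Real.sqrt 2) x := by
    simpa using (hasDerivAt_id x).mul_const (Real.sqrt 2)
  have hPs : HasDerivAt (fun y : ℝ => Phi (y * Real.sqrt 2))
      (stdPDF (x * Real.sqrt 2) * Real.sqrt 2) x :=
    by have := (hasDerivAt_Phi (x * Real.sqrt 2)).comp x hid; exact this
  have h1 : HasDerivAt (fun y => y * Phi y ^ 2)
      (Phi x ^ 2 + x * (2 * Phi x * stdPDF x)) x := by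
    have := (hasDerivAt_id x).mul (hP.pow 2)
    refine this.congr_deriv ?_
    · simp only [Pi.pow_apply, id_eq, Nat.cast_ofNat, pow_one, one_mul]
      ring
  have h2 : HasDerivAt (fun y => y * Phi y) (Phi x + x * stdPDF x) x := by
    have := (hasDerivAt_id x).mul hP
    refine this.congr_deriv ?_
    · simp only [id_eq, one_mul]
  have h3 : HasDerivAt (fun y => 2 * stdPDF y * Phi y)
      (2 * (-x * stdPDF x) * Phi x + 2 * stdPDF x * stdPDF x) x :=
    (hf.const_mul 2).mul hP
  have h5 : HasDerivAt (fun y => 1 / Real.sqrt Real.pi * Phi (y * Real.sqrt 2))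
      (1 / Real.sqrt Real.pi * (stdPDF (x * Real.sqrt 2) * Real.sqrt 2)) x :=
    hPs.const_mul _
  have hD := (((h1.sub h2).add h3).sub hf).sub h5
  have hkey := key_pdf_identity x
  refine hD.congr_deriv ?_
  linear_combination hkey

lemma tendsto_Gfun_atTop : Tendsto Gfun atTop (nhds (-(1 / Real.sqrt Real.pi))) := by
  have hT1 : Tendsto (fun x => x * Phi x ^ 2 - x * Phi x) atTop (nhds 0) := by
    have hlow : Tendsto (fun x => -(x * stdPDF x)) atTop (nhds (-0)) := tendsto_mul_stdPDF.neg
    rw [neg_zero] at hlow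
    apply tendsto_of_tendsto_of_tendsto_of_le_of_le' hlow tendsto_const_nhds
    · filter_upwards [eventually_ge_atTop (1:ℝ)] with x hx
      have h1 := one_sub_Phi_le hx
      have h2 := Phi_nonneg x
      have h3 := Phi_le_one x
      have hx0 : (0:ℝ) ≤ x := by linarith
      have hA := mul_le_mul_of_nonneg_left h1 hx0
      have hB := mul_nonneg hx0 (sq_nonneg (1 - Phi x))
      nlinarith [hA, hB]
    · filter_upwards [eventually_ge_atTop (1:ℝ)] with x hx
      have h2 := Phi_nonneg x
      have h3 := Phi_le_one x
      have hx0 : (0:ℝ) ≤ x := by linarith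
      nlinarith [mul_nonneg (mul_nonneg hx0 h2) (sub_nonneg.mpr h3)]
  have hT2 : Tendsto (fun x => 2 * stdPDF x * Phi x - stdPDF x) atTop (nhds 0) := by
    have := ((tendsto_stdPDF_atTop.const_mul 2).mul tendsto_Phi_atTop).sub tendsto_stdPDF_atTop
    simpa using this
  have hT3 : Tendsto (fun x => 1 / Real.sqrt Real.pi * Phi (x * Real.sqrt 2)) atTop
      (nhds (1 / Real.sqrt Real.pi * 1)) := by
    have hc : Tendsto (fun x : ℝ => x * Real.sqrt 2) atTop atTop :=
      Tendsto.atTop_mul_const (Real.sqrt_pos.mpr two_pos) tendsto_id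
    exact (tendsto_Phi_atTop.comp hc).const_mul _
  have h := (hT1.add hT2).sub hT3
  rw [mul_one] at h
  have heq : (fun x => x * Phi x ^ 2 - x * Phi x + (2 * stdPDF x * Phi x - stdPDF x)
      - 1 / Real.sqrt Real.pi * Phi (x * Real.sqrt 2)) = Gfun := by
    funext x; unfold Gfun; ring
  rw [heq] at h
  simpa using h

lemma Phi_sub_sq_nonneg (x : ℝ) : 0 ≤ Phi x - Phi x ^ 2 := by
  nlinarith [Phi_nonneg x, Phi_le_one x]

lemma integral_Phi_tail (a : ℝ) :
    ∫ x in Ioi a, (Phi x - Phi x ^ 2) = 1 / Real.sqrt Real.pi + Gfun a := by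
  have hderiv : ∀ x ∈ Ici a, HasDerivAt (fun y => -Gfun y) (Phi x - Phi x ^ 2) x := by
    intro x _
    exact (hasDerivAt_Gfun x).neg.congr_deriv (by ring)
  have hpos : ∀ x ∈ Ioi a, 0 ≤ Phi x - Phi x ^ 2 := fun x _ => Phi_sub_sq_nonneg x
  have htend : Tendsto (fun y => -Gfun y) atTop (nhds (1 / Real.sqrt Real.pi)) := by
    simpa using tendsto_Gfun_atTop.neg
  have := integral_Ioi_of_hasDerivAt_of_nonneg' hderiv hpos htend
  rw [this]; ring

lemma integrableOn_Phi_tail (a : ℝ) :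
    IntegrableOn (fun x => Phi x - Phi x ^ 2) (Ioi a) := by
  have hderiv : ∀ x ∈ Ici a, HasDerivAt (fun y => -Gfun y) (Phi x - Phi x ^ 2) x := by
    intro x _
    exact (hasDerivAt_Gfun x).neg.congr_deriv (by ring)
  have hpos : ∀ x ∈ Ioi a, 0 ≤ Phi x - Phi x ^ 2 := fun x _ => Phi_sub_sq_nonneg x
  have htend : Tendsto (fun y => -Gfun y) atTop (nhds (1 / Real.sqrt Real.pi)) := by
    simpa using tendsto_Gfun_atTop.neg
  exact integrableOn_Ioi_deriv_of_nonneg' hderiv hpos htend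

end Aux

section Main

open Filter

variable {μ σ t : ℝ}

lemma gaussMeasure_eq (μ : ℝ) {σ : ℝ} (hσ : 0 < σ) :
    gaussMeasure μ σ = stdNormal.map (fun x => σ * x + μ) := by
  have h1 : (fun x : ℝ => σ * x + μ) = (fun x : ℝ => x + μ) ∘ (fun x : ℝ => σ * x) := rfl
  rw [gaussMeasure, h1, ← Measure.map_map (measurable_add_const μ) (measurable_const_mul σ)]
  rw [stdNormal]
  rw [show (fun x : ℝ => σ * x) = (σ * ·) from rfl, gaussianReal_map_const_mul σ]
  rw [show (fun x : ℝ => x + μ) = (· + μ) from rfl, gaussianReal_map_add_const μ]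
  congr 1
  · simp
  · ext; simp; rfl

lemma preimage_affine_Iic (u : ℝ) (hσ : 0 < σ) :
    (fun x : ℝ => σ * x + μ) ⁻¹' Iic u = Iic ((u - μ) / σ) := by
  ext z
  simp only [mem_preimage, mem_Iic]
  rw [le_div_iff₀ hσ]
  constructor <;> intro h <;> nlinarith

lemma preimage_affine_Ici (u : ℝ) (hσ : 0 < σ) :
    (fun x : ℝ => σ * x + μ) ⁻¹' Ici u = Ici ((u - μ) / σ) := by
  ext z
  simp only [mem_preimage, mem_Ici]
  rw [div_le_iff₀ hσ]
  constructor <;> intro h <;> nlinarith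

lemma gaussMeasure_Iic (hσ : 0 < σ) (u : ℝ) :
    gaussMeasure μ σ (Iic u) = ENNReal.ofReal (normCDF μ σ u) := by
  rw [gaussMeasure_eq μ hσ, Measure.map_apply (by fun_prop) measurableSet_Iic,
    preimage_affine_Iic u hσ, normCDF, Phi, ENNReal.ofReal_toReal (measure_ne_top _ _)]

lemma normCDF_nonneg (u : ℝ) : 0 ≤ normCDF μ σ u := Phi_nonneg _

lemma normCDF_le_one (u : ℝ) : normCDF μ σ u ≤ 1 := Phi_le_one _

lemma inner_lintegral (hσ : 0 < σ) (u : ℝ) :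
    ∫⁻ y, ENNReal.ofReal ((normCDF μ σ u - (Ici y).indicator (fun _ => (1:ℝ)) u) ^ 2)
      ∂(gaussMeasure μ σ)
      = ENNReal.ofReal (normCDF μ σ u - normCDF μ σ u ^ 2) := by
  set c := normCDF μ σ u with hc
  have hc0 : 0 ≤ c := normCDF_nonneg u
  have hc1 : c ≤ 1 := normCDF_le_one u
  have hrw : (fun y => ENNReal.ofReal ((c - (Ici y).indicator (fun _ => (1:ℝ)) u) ^ 2))
      = fun y => (Iic u).indicator (fun _ => ENNReal.ofReal ((c - 1) ^ 2)) y
        + (Ioi u).indicator (fun _ => ENNReal.ofReal (c ^ 2)) y := by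
    funext y
    by_cases h : y ≤ u
    · have h2 : y ∉ Ioi u := by simpa using h
      simp [Set.indicator_of_mem (Set.mem_Iic.mpr h), Set.indicator_of_notMem h2,
        Set.indicator_of_mem (Set.mem_Ici.mpr h)]
    · have h1 : y ∉ Iic u := by simpa using h
      have h2 : y ∈ Ioi u := by simpa using lt_of_not_ge h
      have h3 : u ∉ Ici y := by simpa using h
      simp [Set.indicator_of_notMem h1, Set.indicator_of_mem h2,
        Set.indicator_of_notMem h3]
  rw [hrw, lintegral_add_left (measurable_const.indicator measurableSet_Iic),
    lintegral_indicator measurableSet_Iic, lintegral_indicator measurableSet_Ioi,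
    setLIntegral_const, setLIntegral_const,
    gaussMeasure_Iic hσ u, ← hc]
  have hcompl : gaussMeasure μ σ (Ioi u) = ENNReal.ofReal (1 - c) := by
    rw [← compl_Iic, measure_compl measurableSet_Iic (measure_ne_top _ _),
      gaussMeasure_Iic hσ u, ← hc]
    have huniv : (gaussMeasure μ σ) Set.univ = 1 := measure_univ
    rw [huniv, ← ENNReal.ofReal_one, ← ENNReal.ofReal_sub _ hc0]
  rw [hcompl, ← ENNReal.ofReal_mul (by positivity), ← ENNReal.ofReal_mul (by positivity),
    ← ENNReal.ofReal_add (mul_nonneg (sq_nonneg _) hc0)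
      (mul_nonneg (sq_nonneg c) (by linarith))]
  congr 1
  ring

lemma measurable_normCDF : Measurable (normCDF μ σ) := by
  have : Continuous (normCDF μ σ) := continuous_Phi.comp (by fun_prop)
  exact this.measurable

lemma measurable_joint (μ σ : ℝ) :
    Measurable (fun p : ℝ × ℝ =>
      ENNReal.ofReal ((normCDF μ σ p.2 - (Ici p.1).indicator (fun _ => (1:ℝ)) p.2) ^ 2)) := by
  have hind : (fun p : ℝ × ℝ => (Ici p.1).indicator (fun _ => (1:ℝ)) p.2)
      = {p : ℝ × ℝ | p.1 ≤ p.2}.indicator (fun _ => (1:ℝ)) := by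
    funext p
    by_cases h : p.1 ≤ p.2
    · simp [Set.indicator_of_mem, Set.mem_Ici.mpr h, h]
    · have h' : ¬ p.2 ∈ Ici p.1 := by simpa using h
      simp [Set.indicator_of_notMem, h', h]
  have h1 : Measurable (fun p : ℝ × ℝ => (Ici p.1).indicator (fun _ => (1:ℝ)) p.2) := by
    rw [hind]
    exact measurable_const.indicator (measurableSet_le measurable_fst measurable_snd)
  have h2 : Measurable (fun p : ℝ × ℝ => normCDF μ σ p.2) := measurable_normCDF.comp measurable_snd
  exact ((h2.sub h1).pow_const 2).ennreal_ofReal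

theorem stmt_3 (μ σ t : ℝ) (hσ : 0 < σ) :
    etwCRPS (gamma1 t) μ σ =
      σ * ((t - μ) / σ * Phi ((t - μ) / σ) ^ 2 - (t - μ) / σ * Phi ((t - μ) / σ)
        + 1 / Real.sqrt Real.pi - 1 / Real.sqrt Real.pi * Phi ((t - μ) / σ * Real.sqrt 2)
        + 2 * stdPDF ((t - μ) / σ) * Phi ((t - μ) / σ) - stdPDF ((t - μ) / σ)) := by
  classical
  set tt := (t - μ) / σ with htt
  set ν := gaussMeasure μ σ with hν
  set F := normCDF μ σ with hF
  -- gamma1 is the restriction of Lebesgue measure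
  have hγ : gamma1 t = volume.restrict (Ici t) := by
    rw [gamma1, withDensity_indicator measurableSet_Ici,
      show (fun _ : ℝ => (1:ENNReal)) = 1 from rfl, withDensity_one]
  set e : ℝ → ℝ → ENNReal := fun y u =>
    ENNReal.ofReal ((F u - (Ici y).indicator (fun _ => (1:ℝ)) u) ^ 2) with he
  have hemeas : Measurable (fun p : ℝ × ℝ => e p.1 p.2) := measurable_joint μ σ
  -- inner integral as lintegral
  have htw : ∀ y, twCRPS (gamma1 t) F y = (∫⁻ u in Ici t, e y u).toReal := by
    intro y
    rw [twCRPS, hγ]; exact integral_eq_lintegral_of_nonneg_ae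
      (Eventually.of_forall fun u => sq_nonneg _)
      (((measurable_normCDF.sub
        (measurable_const.indicator measurableSet_Ici)).pow_const 2).aestronglyMeasurable)
  -- the swapped double lintegral
  have hswap : ∫⁻ y, (∫⁻ u in Ici t, e y u) ∂ν = ∫⁻ u in Ici t, (∫⁻ y, e y u ∂ν) := by
    rw [lintegral_lintegral_swap]
    exact hemeas.aemeasurable
  -- inner y-integral computed
  have hinner : ∀ u, (∫⁻ y, e y u ∂ν) = ENNReal.ofReal (F u - F u ^ 2) := fun u =>
    inner_lintegral hσ u
  -- change of variables for the u-integral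
  have hmapvol : volume.restrict (Ici t)
      = ENNReal.ofReal σ • Measure.map (fun x => σ * x + μ) (volume.restrict (Ici tt)) := by
    have hmap : Measure.map (fun x : ℝ => σ * x + μ) volume = ENNReal.ofReal σ⁻¹ • volume := by
      have h1 : (fun x : ℝ => σ * x + μ) = (fun x : ℝ => x + μ) ∘ (fun x : ℝ => σ * x) := rfl
      rw [h1, ← Measure.map_map (measurable_add_const μ) (measurable_const_mul σ),
        show (fun x : ℝ => σ * x) = (σ * ·) from rfl, Real.map_volume_mul_left (ne_of_gt hσ),
        Measure.map_smul, map_add_right_eq_self volume μ, abs_of_pos (inv_pos.mpr hσ)]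
    have h2 := Measure.restrict_map (μ := (volume : Measure ℝ)) (f := fun x : ℝ => σ * x + μ)
      (by fun_prop) (measurableSet_Ici (a := t))
    rw [hmap, preimage_affine_Ici t hσ, ← htt] at h2
    rw [Measure.restrict_smul] at h2
    rw [← h2, smul_smul, ← ENNReal.ofReal_mul hσ.le, mul_inv_cancel₀ (ne_of_gt hσ),
      ENNReal.ofReal_one, one_smul]
  have hFcomp : ∀ x : ℝ, F (σ * x + μ) = Phi x := by
    intro x
    rw [hF, normCDF]
    congr 1
    field_simp
    ring
  have hint : ∫⁻ u in Ici t, ENNReal.ofReal (F u - F u ^ 2)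
      = ENNReal.ofReal σ * ∫⁻ x in Ici tt, ENNReal.ofReal (Phi x - Phi x ^ 2) := by
    rw [hmapvol, lintegral_smul_measure, lintegral_map (f := fun u => ENNReal.ofReal (F u - F u ^ 2))
      ((measurable_normCDF.sub (measurable_normCDF.pow_const 2)).ennreal_ofReal) (by fun_prop)]
    congr 1
    refine lintegral_congr fun x => ?_
    show ENNReal.ofReal (F (σ * x + μ) - F (σ * x + μ) ^ 2) = ENNReal.ofReal (Phi x - Phi x ^ 2)
    rw [hFcomp x]
  -- the real tail integral
  have hIoiIci : volume.restrict (Ioi tt) = volume.restrict (Ici tt) :=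
    restrict_Ioi_eq_restrict_Ici
  have hIciInt : IntegrableOn (fun x => Phi x - Phi x ^ 2) (Ici tt) := by
    have := integrableOn_Phi_tail tt
    rwa [IntegrableOn, hIoiIci] at this
  have hIciVal : ∫ x in Ici tt, (Phi x - Phi x ^ 2) = 1 / Real.sqrt Real.pi + Gfun tt := by
    rw [← integral_Phi_tail tt]
    exact setIntegral_congr_set (Ioi_ae_eq_Ici).symm
  have hofReal : ∫⁻ x in Ici tt, ENNReal.ofReal (Phi x - Phi x ^ 2)
      = ENNReal.ofReal (∫ x in Ici tt, (Phi x - Phi x ^ 2)) := by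
    rw [← ofReal_integral_eq_lintegral_ofReal hIciInt
      (Eventually.of_forall fun x => Phi_sub_sq_nonneg x)]
  -- total double lintegral is finite
  have hJ : ∫⁻ y, (∫⁻ u in Ici t, e y u) ∂ν
      = ENNReal.ofReal (σ * (1 / Real.sqrt Real.pi + Gfun tt)) := by
    rw [hswap]
    have : ∫⁻ u in Ici t, (∫⁻ y, e y u ∂ν) = ∫⁻ u in Ici t, ENNReal.ofReal (F u - F u ^ 2) :=
      lintegral_congr fun u => hinner u
    rw [this, hint, hofReal, hIciVal, ← ENNReal.ofReal_mul hσ.le]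
  have hJfin : (∫⁻ y, (∫⁻ u in Ici t, e y u) ∂ν) ≠ ⊤ := by
    rw [hJ]; exact ENNReal.ofReal_ne_top
  have hmeasT : Measurable (fun y => ∫⁻ u in Ici t, e y u) :=
    Measurable.lintegral_prod_right hemeas
  have haefin : ∀ᵐ y ∂ν, (∫⁻ u in Ici t, e y u) < ⊤ := ae_lt_top hmeasT hJfin
  -- put it together
  have hmain : etwCRPS (gamma1 t) μ σ = (∫⁻ y, (∫⁻ u in Ici t, e y u) ∂ν).toReal := by
    rw [etwCRPS, ← hν, ← hF]
    have : ∀ y, twCRPS (gamma1 t) F y = (fun z => z.toReal) (∫⁻ u in Ici t, e y u) := htw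
    rw [show (fun y => twCRPS (gamma1 t) F y) = fun y => (∫⁻ u in Ici t, e y u).toReal from
      funext this]
    exact integral_toReal hmeasT.aemeasurable haefin
  rw [hmain, hJ, ENNReal.toReal_ofReal]
  · unfold Gfun; ring
  · have h1 : 0 ≤ ∫ x in Ici tt, (Phi x - Phi x ^ 2) :=
      setIntegral_nonneg measurableSet_Ici fun x _ => Phi_sub_sq_nonneg x
    rw [hIciVal] at h1
    positivity

end Main
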